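/- Let M be a finite set of m chores and let there be n ≥ 2 agents, each with an additive cost function v_i : 2^M → ℝ≥0. Then there exist pairwise disjoint bundles A_1,…,A_n ⊆ M such that v_i(A_i) ≤ μ_i^n(M) for every agent i and |⋃_i A_i| ≥ m − n + 2; that is, a full MMS allocation of chores exists in which at most n − 2 chores are left unallocated. -/

import Mathlib

open Finset

/-- The maximin share for chores: the minimum over all partitions of `S` into `d` bundles of
the maximum cost of a bundle. -/
noncomputable def mmsChores {G : Type*} (v : Finset G → ℝ) (d : ℕ) (S : Finset G) : ℝ :=
  ⨅ P : G → Fin d, ⨆ j : Fin d, v (S.filter fun g => P g = j)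

/-!
Agent `0` takes an MMS partition of the chores into `n` parts, each costing it at most its
maximin share. While at least three parts remain, some other agent accepts one of them (by
averaging, since its whole cost is at most `n` times its share); among all agents and all
acceptable supersets of that part, take one of maximal size `X`. If `X` is not everything, add one
more chore `c` to it: now `X ∪ {c}` is too expensive for every remaining agent, so that agent gets
`X`, `c` is discarded, and the other parts minus `X ∪ {c}` form an instance with one agent and one
part fewer in which everyone still pays at most the average. With two parts left, cut-and-choose
allocates everything. Each round discards at most one chore, so at most `n - 2` are lost.
-/

namespace Chores

section MaximinShare

variable {G : Type*} [Finite G]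

theorem exists_partition_le_mmsChores {d : ℕ} [NeZero d] (v : Finset G → ℝ) (S : Finset G) :
    ∃ P : G → Fin d, ∀ j, v (S.filter fun g => P g = j) ≤ mmsChores v d S := by
  obtain ⟨P, hP⟩ :=
    exists_eq_ciInf_of_finite (f := fun P : G → Fin d => ⨆ j, v (S.filter fun g => P g = j))
  exact ⟨P, fun j => (le_ciSup (f := fun j => v (S.filter fun g => P g = j))
    (Set.finite_range _).bddAbove j).trans_eq hP⟩

theorem sum_le_mul_mmsChores {d : ℕ} [NeZero d] (f : G → ℝ) (S : Finset G) :
    ∑ g ∈ S, f g ≤ d * mmsChores (fun T => ∑ g ∈ T, f g) d S := by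
  obtain ⟨P, hP⟩ := exists_partition_le_mmsChores (d := d) (fun T => ∑ g ∈ T, f g) S
  calc ∑ g ∈ S, f g = ∑ j, ∑ g ∈ S with P g = j, f g := (sum_fiberwise S P f).symm
    _ ≤ ∑ _j : Fin d, mmsChores (fun T => ∑ g ∈ T, f g) d S := sum_le_sum fun j _ => hP j
    _ = d * mmsChores (fun T => ∑ g ∈ T, f g) d S := by simp

end MaximinShare

theorem mmsChores_nonneg {G : Type*} {v : Finset G → ℝ} (hv : ∀ S, 0 ≤ v S) (d : ℕ)
    (S : Finset G) : 0 ≤ mmsChores v d S :=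
  Real.iInf_nonneg fun _ => Real.iSup_nonneg fun _ => hv _

variable {G ι κ : Type*} {v : ι → G → ℝ} {μ : ι → ℝ}

structure IsAllocation (v : ι → G → ℝ) (μ : ι → ℝ) (S : Finset G) (A : ι → Finset G) :
    Prop where
  subset : ∀ i, A i ⊆ S
  cost_le : ∀ i, ∑ g ∈ A i, v i g ≤ μ i
  pairwise_disjoint : Pairwise fun i j => Disjoint (A i) (A j)

theorem IsAllocation.empty (hμ : ∀ i, 0 ≤ μ i) (S : Finset G) :
    IsAllocation v μ S fun _ => ∅ :=
  ⟨fun _ => empty_subset _, by simpa using hμ, fun _ _ _ => disjoint_empty_left _⟩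

theorem IsAllocation.update [DecidableEq ι] {S' S X : Finset G} {A : ι → Finset G}
    (h : IsAllocation v μ S' A) (hS' : S' ⊆ S) (hX : X ⊆ S) (hXS' : Disjoint X S') {w : ι}
    (hw : ∑ g ∈ X, v w g ≤ μ w) : IsAllocation v μ S (Function.update A w X) where
  subset i := by
    rcases eq_or_ne i w with rfl | hi
    · simpa using hX
    · simpa [hi] using (h.subset i).trans hS'
  cost_le i := by
    rcases eq_or_ne i w with rfl | hi
    · simpa using hw
    · simpa [hi] using h.cost_le i
  pairwise_disjoint i j hij := by
    have hXA : ∀ k, Disjoint X (A k) := fun k => hXS'.mono_right (h.subset k)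
    simp only [Function.update_apply]
    split_ifs with hi hj hj
    · exact absurd (hi.trans hj.symm) hij
    · exact hXA j
    · exact (hXA i).symm
    · exact h.pairwise_disjoint hij

variable [DecidableEq G]

theorem card_biUnion_update [DecidableEq ι] {I : Finset ι} {w : ι} (hw : w ∉ I)
    {A : ι → Finset G} {X : Finset G} (hX : ∀ i ∈ I, Disjoint X (A i)) :
    ((insert w I).biUnion (Function.update A w X)).card = X.card + (I.biUnion A).card := by
  have hIA : I.biUnion (Function.update A w X) = I.biUnion A :=
    biUnion_congr rfl fun i hi => Function.update_of_ne (ne_of_mem_of_not_mem hi hw) _ _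
  rw [biUnion_insert, Function.update_self, hIA,
    card_union_of_disjoint (disjoint_biUnion_right _ _ _ |>.2 hX)]

theorem exists_le_of_sum_biUnion_le {K : Finset κ} {P : κ → Finset G} (hK : K.Nonempty)
    (hP : (K : Set κ).PairwiseDisjoint P) {f : G → ℝ} {b : ℝ}
    (h : ∑ g ∈ K.biUnion P, f g ≤ K.card * b) : ∃ k ∈ K, ∑ g ∈ P k, f g ≤ b := by
  rw [sum_biUnion hP] at h
  exact exists_le_of_sum_le hK (by simpa using h)

theorem exists_maximal_acceptable {J : Finset ι} {T S : Finset G} (hTS : T ⊆ S) {j₀ : ι}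
    (hj₀ : j₀ ∈ J) (hT : ∑ g ∈ T, v j₀ g ≤ μ j₀) :
    ∃ w ∈ J, ∃ X, T ⊆ X ∧ X ⊆ S ∧ ∑ g ∈ X, v w g ≤ μ w ∧
      ∀ j ∈ J, ∀ Y, T ⊆ Y → Y ⊆ S → ∑ g ∈ Y, v j g ≤ μ j → Y.card ≤ X.card := by
  obtain ⟨⟨w, X⟩, hmem, hmax⟩ := exists_max_image
    ((J ×ˢ S.powerset).filter fun q => T ⊆ q.2 ∧ ∑ g ∈ q.2, v q.1 g ≤ μ q.1)
    (fun q => q.2.card) ⟨(j₀, T), by simp [*]⟩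
  simp only [mem_filter, mem_product, mem_powerset] at hmem
  exact ⟨w, hmem.1.1, X, hmem.2.1, hmem.1.2, hmem.2.2,
    fun j hj Y hTY hYS hY => hmax (j, Y) (by simp [*])⟩

theorem biUnion_erase_sdiff [DecidableEq κ] {K : Finset κ} {P : κ → Finset G} {t : κ}
    {R : Finset G} (ht : P t ⊆ R) :
    (K.erase t).biUnion (fun k => P k \ R) = K.biUnion P \ R := by
  ext g
  simp only [mem_biUnion, mem_erase, mem_sdiff]
  constructor
  · rintro ⟨k, ⟨-, hk⟩, hg, hgR⟩
    exact ⟨⟨k, hk, hg⟩, hgR⟩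
  · rintro ⟨⟨k, hk, hg⟩, hgR⟩
    exact ⟨k, ⟨fun hkt => hgR (ht (hkt ▸ hg)), hk⟩, hg, hgR⟩

theorem exists_allocation_of_sum_le [DecidableEq ι] (hμ : ∀ i, 0 ≤ μ i) {I : Finset ι} {w : ι}
    (hw : w ∈ I) {S : Finset G} (hwS : ∑ g ∈ S, v w g ≤ μ w) :
    ∃ A, IsAllocation v μ S A ∧ S ⊆ I.biUnion A := by
  let A := Function.update (fun _ => (∅ : Finset G)) w S
  refine ⟨A, (IsAllocation.empty hμ ∅).update (empty_subset _) Subset.rfl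
    (disjoint_empty_right _) hwS, ?_⟩
  have hAw : A w = S := Function.update_self _ _ _
  exact hAw ▸ subset_biUnion_of_mem A hw

variable (κ v μ) in
/-- The divider `d` has split the chores `⋃ k ∈ K, P k` into `N` parts it accepts, and every
agent of `J` pays at most `N * μ j` for all of them; then an allocation leaves at most `N - 2`
chores out (written additively, as `N - 2` truncates in `ℕ`). -/
def DividerAllocates [DecidableEq ι] (d : ι) (N : ℕ) : Prop :=
  ∀ (K : Finset κ) (P : κ → Finset G) (J : Finset ι), K.card = N → d ∉ J → N ≤ J.card + 1 →
    (K : Set κ).PairwiseDisjoint P → (∀ k ∈ K, ∑ g ∈ P k, v d g ≤ μ d) →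
    (∀ j ∈ J, ∑ g ∈ K.biUnion P, v j g ≤ N * μ j) →
    ∃ A, IsAllocation v μ (K.biUnion P) A ∧
      (K.biUnion P).card + 2 ≤ ((insert d J).biUnion A).card + N

variable [DecidableEq ι] [DecidableEq κ]

theorem dividerAllocates_two (hμ : ∀ i, 0 ≤ μ i) (d : ι) : DividerAllocates κ v μ d 2 := by
  intro K P J hK hdJ hJ hP hd hmass
  obtain ⟨j, hj⟩ : J.Nonempty := card_pos.1 (by omega)
  have hdj : d ≠ j := fun h => hdJ (h ▸ hj)
  obtain ⟨t, ht, hjt⟩ :=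
    exists_le_of_sum_biUnion_le (card_pos.1 (by omega)) hP (by rw [hK]; exact_mod_cast hmass j hj)
  obtain ⟨t', ht'⟩ := card_eq_one.1 (show (K.erase t).card = 1 by rw [card_erase_of_mem ht, hK])
  have ht'K : t' ∈ K.erase t := ht' ▸ mem_singleton_self t'
  have hS : K.biUnion P = P t ∪ P t' := by
    rw [← insert_erase ht, ht', biUnion_insert, singleton_biUnion]
  have hdisj : Disjoint (P t) (P t') := hP ht (mem_of_mem_erase ht'K) (ne_of_mem_erase ht'K).symm
  let A := Function.update (Function.update (fun _ => (∅ : Finset G)) d (P t')) j (P t)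
  have hA : IsAllocation v μ (K.biUnion P) A :=
    ((IsAllocation.empty hμ ∅).update (empty_subset _) Subset.rfl (disjoint_empty_right _)
      (hd t' (mem_of_mem_erase ht'K))).update (hS ▸ subset_union_right)
      (hS ▸ subset_union_left) hdisj hjt
  have hAj : A j = P t := Function.update_self _ _ _
  have hAd : A d = P t' := by simp [A, hdj]
  have hcover : K.biUnion P ⊆ (insert d J).biUnion A := hS ▸ union_subset
    (hAj ▸ subset_biUnion_of_mem A (mem_insert_of_mem hj))
    (hAd ▸ subset_biUnion_of_mem A (mem_insert_self d J))
  exact ⟨A, hA, by have := card_le_card hcover; omega⟩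

theorem dividerAllocates_succ (hv : ∀ i g, 0 ≤ v i g) (hμ : ∀ i, 0 ≤ μ i) {d : ι} {N : ℕ}
    (hN : 2 ≤ N) (ih : DividerAllocates κ v μ d N) : DividerAllocates κ v μ d (N + 1) := by
  intro K P J hK hdJ hJ hP hd hmass
  set S := K.biUnion P with hS
  obtain ⟨j₀, hj₀⟩ : J.Nonempty := card_pos.1 (by omega)
  obtain ⟨t, ht, hj₀t⟩ := exists_le_of_sum_biUnion_le (card_pos.1 (by omega)) hP
    (by rw [hK]; exact_mod_cast hmass j₀ hj₀)
  obtain ⟨w, hwJ, X, htX, hXS, hwX, hmax⟩ :=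
    exists_maximal_acceptable (subset_biUnion_of_mem P ht) hj₀ hj₀t
  by_cases hSX : S ⊆ X
  · obtain ⟨A, hA, hcover⟩ := exists_allocation_of_sum_le hμ
      (I := insert d J) (S := S) (mem_insert_of_mem hwJ) (Subset.antisymm hXS hSX ▸ hwX)
    exact ⟨A, hA, by have := card_le_card hcover; omega⟩
  obtain ⟨c, hcS, hcX⟩ := not_subset.1 hSX
  set R := insert c X
  have hRS : R ⊆ S := insert_subset hcS hXS
  have htR : P t ⊆ R := htX.trans (subset_insert _ _)
  have hR : ∀ j ∈ J, μ j < ∑ g ∈ R, v j g := fun j hj => lt_of_not_ge fun hle => by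
    have := hmax j hj R htR hRS hle
    rw [card_insert_of_notMem hcX] at this
    omega
  obtain ⟨A, hA, hcover⟩ := ih (K.erase t) (fun k => P k \ R) (J.erase w)
    (by rw [card_erase_of_mem ht, hK]; rfl) (fun h => hdJ (mem_of_mem_erase h))
    (by rw [card_erase_of_mem hwJ]; omega)
    ((hP.subset (coe_subset.2 (erase_subset t K))).mono_on fun _ _ => sdiff_subset)
    (fun k hk => (sum_le_sum_of_subset_of_nonneg sdiff_subset fun g _ _ => hv d g).trans
      (hd k (mem_of_mem_erase hk)))
    (fun j hj => by
      have hjJ := mem_of_mem_erase hj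
      rw [biUnion_erase_sdiff htR, sum_sdiff_eq_sub hRS]
      have hj : ∑ g ∈ S, v j g ≤ ((N : ℝ) + 1) * μ j := by exact_mod_cast hmass j hjJ
      linarith [hR j hjJ])
  rw [biUnion_erase_sdiff htR, ← hS] at hA hcover
  have hXSR : Disjoint X (S \ R) := disjoint_sdiff.mono_left (subset_insert c X)
  refine ⟨Function.update A w X, hA.update sdiff_subset hXS hXSR hwX, ?_⟩
  have hins : insert d J = insert w (insert d (J.erase w)) := by
    rw [insert_comm, insert_erase hwJ]
  have hwd : w ≠ d := ne_of_mem_of_not_mem hwJ hdJ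
  rw [hins, card_biUnion_update (by simp [hwd]) fun i _ => hXSR.mono_right (hA.subset i)]
  have := card_sdiff_add_card_eq_card hRS
  have : R.card = X.card + 1 := card_insert_of_notMem hcX
  omega

theorem dividerAllocates (hv : ∀ i g, 0 ≤ v i g) (hμ : ∀ i, 0 ≤ μ i) (d : ι) {N : ℕ}
    (hN : 2 ≤ N) : DividerAllocates κ v μ d N := by
  induction N, hN using Nat.le_induction with
  | base => exact dividerAllocates_two hμ d
  | succ N hN ih => exact dividerAllocates_succ hv hμ hN ih

end Chores

/-- For every chores instance with `n ≥ 2` agents and additive cost functions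
(weights `w i`), there exist pairwise disjoint bundles `A₁,…,Aₙ` with `v_i(A_i) ≤ μ_i^n(M)`
for every agent `i`, and at least `m − n + 2` chores allocated (at most `n − 2` left out). -/
theorem stmt18 {G : Type*} [Fintype G] [DecidableEq G] (n : ℕ) (hn : 2 ≤ n)
    (w : Fin n → G → ℝ) (hw : ∀ i g, 0 ≤ w i g) :
    ∃ A : Fin n → Finset G,
      (∀ i j, i ≠ j → Disjoint (A i) (A j)) ∧
      (∀ i, ∑ g ∈ A i, w i g ≤ mmsChores (fun S => ∑ g ∈ S, w i g) n Finset.univ) ∧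
      Fintype.card G + 2 ≤ (Finset.univ.biUnion A).card + n := by
  have : NeZero n := ⟨by omega⟩
  obtain ⟨P, hP⟩ := Chores.exists_partition_le_mmsChores (d := n) (fun S => ∑ g ∈ S, w 0 g) univ
  set parts : Fin n → Finset G := fun k => univ.filter (P · = k)
  have hcover : univ.biUnion parts = univ := by
    ext; simp [parts]
  have hμ : ∀ i, 0 ≤ mmsChores (fun S => ∑ g ∈ S, w i g) n univ := fun i =>
    Chores.mmsChores_nonneg (fun S => sum_nonneg fun g _ => hw i g) _ _
  have hmass : ∀ j ∈ univ.erase 0, ∑ g ∈ univ.biUnion parts, w j g ≤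
      (n : ℝ) * mmsChores (fun S => ∑ g ∈ S, w j g) n univ := fun j _ => by
    rw [hcover]; exact Chores.sum_le_mul_mmsChores (w j) univ
  obtain ⟨A, hA, hcard⟩ := Chores.dividerAllocates (κ := Fin n) hw hμ 0 hn
    univ parts (univ.erase 0) (by simp) (notMem_erase _ _)
    (by rw [card_erase_of_mem (mem_univ _), card_univ, Fintype.card_fin]; omega)
    (Set.pairwiseDisjoint_filter P _ _) (fun k _ => hP k) hmass
  rw [insert_erase (mem_univ _), hcover] at hcard
  exact ⟨A, hA.pairwise_disjoint, hA.cost_le, by simpa using hcard⟩
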